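/- arXiv:1911.04956 — 4 statements merged into one kernel-verified Lean document; each statement's English description precedes it below -/
import Mathlib

section
/- Let D be an acyclic digraph, u, x non-adjacent vertices of D, and D'' the digraph obtained from D by swapping both the in-neighbour sets and the out-neighbour sets of u and x. Then the niche hypergraph of D'' equals the hypergraph obtained from NH(D) by exchanging the roles of u and x in every hyperedge (i.e., applying the transposition of u and x to each hyperedge). -/
/-- A digraph: a finite vertex set together with a finite set of arcs. -/
structure FinDigraph (α : Type*) where
  verts : Finset α
  arcs : Finset (α × α)

namespace FinDigraph

variable {α : Type*} [DecidableEq α]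

/-- A digraph is legal if arcs join distinct vertices of the digraph and
at most one of `(u,v)`, `(v,u)` is an arc. -/
def IsLegal (D : FinDigraph α) : Prop :=
  (∀ a ∈ D.arcs, a.1 ∈ D.verts ∧ a.2 ∈ D.verts ∧ a.1 ≠ a.2) ∧
    ∀ u v : α, (u, v) ∈ D.arcs → (v, u) ∉ D.arcs

/-- A digraph is acyclic if it has no directed cycle `x₀, x₁, ..., x_{n-1}, x₀`
with `n ≥ 3` and all `xᵢ` distinct. -/
def IsAcyclic (D : FinDigraph α) : Prop :=
  ¬ ∃ (n : ℕ) (x : ℕ → α), 3 ≤ n ∧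
      (∀ i < n, ∀ j < n, i ≠ j → x i ≠ x j) ∧
      (∀ i, i + 1 < n → (x i, x (i + 1)) ∈ D.arcs) ∧
      (x (n - 1), x 0) ∈ D.arcs

/-- The in-neighbour set of a vertex. -/
def inN (D : FinDigraph α) (v : α) : Finset α :=
  D.verts.filter fun u => (u, v) ∈ D.arcs

/-- The out-neighbour set of a vertex. -/
def outN (D : FinDigraph α) (v : α) : Finset α :=
  D.verts.filter fun u => (v, u) ∈ D.arcs

/-- The (edge set of the) niche hypergraph of a digraph: all sets of size at least 2
which are the in-neighbour set or the out-neighbour set of some vertex. -/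
def NH (D : FinDigraph α) : Finset (Finset α) :=
  ((D.verts.image D.inN) ∪ (D.verts.image D.outN)).filter fun e => 2 ≤ e.card

end FinDigraph

/-- A hypergraph: a finite vertex set and a finite family of hyperedges, each a
subset of the vertices of size at least 2. -/
structure FinHypergraph (α : Type*) where
  verts : Finset α
  edges : Finset (Finset α)
  edge_sub : ∀ e ∈ edges, e ⊆ verts
  edge_card : ∀ e ∈ edges, 2 ≤ e.card

namespace FinHypergraph

variable {α : Type*} [DecidableEq α]

/-- The degree of a vertex: the number of hyperedges containing it. -/
def degree (H : FinHypergraph α) (v : α) : ℕ :=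
  (H.edges.filter fun e => v ∈ e).card

/-- A hypergraph is linear if distinct hyperedges share at most one vertex. -/
def IsLinear (H : FinHypergraph α) : Prop :=
  ∀ e ∈ H.edges, ∀ f ∈ H.edges, e ≠ f → (e ∩ f).card ≤ 1

/-- A hypergraph is a hypertree if there is a tree on its vertex set in which
every hyperedge induces a connected subgraph. -/
def IsHypertree (H : FinHypergraph α) : Prop :=
  ∃ T : SimpleGraph {x // x ∈ H.verts}, T.IsTree ∧
    ∀ e ∈ H.edges, (T.induce {x : {x // x ∈ H.verts} | x.1 ∈ e}).Connected

/-- The number of hyperedges intersecting `e` (other than `e` itself), i.e. the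
edge degree of `e`. -/
def nbrCount (H : FinHypergraph α) (e : Finset α) : ℕ :=
  (H.edges.filter fun f => f ≠ e ∧ (e ∩ f).Nonempty).card

/-- A twig: a hyperedge intersecting exactly one other hyperedge. -/
def IsTwig (H : FinHypergraph α) (e : Finset α) : Prop :=
  e ∈ H.edges ∧ H.nbrCount e = 1

/-- A trunk: a hyperedge intersecting at least two other hyperedges. -/
def IsTrunk (H : FinHypergraph α) (e : Finset α) : Prop :=
  e ∈ H.edges ∧ 2 ≤ H.nbrCount e

instance (H : FinHypergraph α) : DecidablePred H.IsTwig := fun e => by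
  unfold IsTwig; infer_instance

instance (H : FinHypergraph α) : DecidablePred H.IsTrunk := fun e => by
  unfold IsTrunk; infer_instance

/-- The branch of a trunk `e`: `e` together with all twigs intersecting `e`. -/
def branch (H : FinHypergraph α) (e : Finset α) : Finset (Finset α) :=
  insert e (H.edges.filter fun f => H.IsTwig f ∧ (e ∩ f).Nonempty)

/-- A family of hyperedges is connected if any two vertices covered by the family are
joined by a chain of vertices in which consecutive vertices share a hyperedge. -/
def EdgesConnected (E : Finset (Finset α)) : Prop :=
  ∀ u v : α, (∃ f ∈ E, u ∈ f) → (∃ f ∈ E, v ∈ f) →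
    Relation.ReflTransGen (fun a b => ∃ f ∈ E, a ∈ f ∧ b ∈ f) u v

end FinHypergraph

/-- `D` is a good digraph of `H` if `D` is acyclic, `NH(D) = H`, and every hyperedge of
`H` contains at most one bud (degree-one vertex) whose in- and out-neighbour sets in `D`
are both nonempty. -/
def GoodDigraph {α : Type*} [DecidableEq α] (D : FinDigraph α) (H : FinHypergraph α) : Prop :=
  D.IsAcyclic ∧ D.verts = H.verts ∧ D.NH = H.edges ∧
    ∀ e ∈ H.edges,
      (e.filter fun v => H.degree v = 1 ∧ (D.inN v).Nonempty ∧ (D.outN v).Nonempty).card ≤ 1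

/-!
`D''` is the relabelling of `D` along the transposition `(u x)`, and this relabelling fixes the
vertex set because `u` and `x` are vertices. In- and out-neighbourhoods, hence the niche
hypergraph, are transported along any relabelling.
-/

namespace FinDigraph

variable {α β : Type*}

def map (e : α ≃ β) (D : FinDigraph α) : FinDigraph β :=
  ⟨D.verts.map e.toEmbedding, D.arcs.map (e.prodCongr e).toEmbedding⟩

theorem map_verts (e : α ≃ β) (D : FinDigraph α) : (D.map e).verts = D.verts.map e.toEmbedding :=
  rfl

theorem mem_map_arcs (e : α ≃ β) (D : FinDigraph α) {a b : β} :
    (a, b) ∈ (D.map e).arcs ↔ (e.symm a, e.symm b) ∈ D.arcs :=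
  Finset.mem_map_equiv

theorem ext {D D' : FinDigraph α} (hV : D.verts = D'.verts) (hA : D.arcs = D'.arcs) :
    D = D' := by
  cases D; cases D'; congr

variable [DecidableEq α] [DecidableEq β] (e : α ≃ β) (D : FinDigraph α)

theorem inN_map (v : β) : (D.map e).inN v = e.finsetCongr (D.inN (e.symm v)) := by
  ext a
  simp [inN, map, Finset.mem_map_equiv]

theorem outN_map (v : β) : (D.map e).outN v = e.finsetCongr (D.outN (e.symm v)) := by
  ext a
  simp [outN, map, Finset.mem_map_equiv]

theorem mem_NH {s : Finset α} :
    s ∈ D.NH ↔ 2 ≤ s.card ∧ ∃ v ∈ D.verts, D.inN v = s ∨ D.outN v = s := by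
  simp only [NH, Finset.mem_filter, Finset.mem_union, Finset.mem_image]
  grind

theorem NH_map : (D.map e).NH = D.NH.map e.finsetCongr.toEmbedding := by
  ext s
  obtain ⟨t, rfl⟩ := e.finsetCongr.surjective s
  rw [Finset.mem_map_equiv, Equiv.symm_apply_apply, mem_NH, mem_NH]
  simp only [map_verts, Finset.mem_map, Equiv.coe_toEmbedding, exists_exists_and_eq_and, inN_map,
    outN_map, Equiv.symm_apply_apply, Equiv.finsetCongr_apply, Finset.map_inj, Finset.card_map]

end FinDigraph

theorem swap_niche_eq_general {α : Type*} [DecidableEq α]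
    (D D'' : FinDigraph α)
    (u x : α) (hu : u ∈ D.verts) (hx : x ∈ D.verts)
    (hV : D''.verts = D.verts)
    (hA : ∀ a b : α, (a, b) ∈ D''.arcs ↔ (Equiv.swap u x a, Equiv.swap u x b) ∈ D.arcs) :
    D''.NH = D.NH.image fun e => e.image (Equiv.swap u x) := by
  have hD'' : D'' = D.map (Equiv.swap u x) := by
    refine FinDigraph.ext ?_ ?_
    · rw [hV, ← Finset.coe_inj, FinDigraph.map_verts, Finset.coe_map]
      exact ((Equiv.swap_bijOn_self (by simp [hu, hx])).image_eq).symm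
    · ext ⟨a, b⟩
      rw [hA, FinDigraph.mem_map_arcs, Equiv.symm_swap]
  rw [hD'', FinDigraph.NH_map, Finset.map_eq_image]
  congr 1
  funext s
  exact Finset.map_eq_image _ s

/-- Swapping the in- and out-neighbour sets of two non-adjacent vertices transposes the
two vertices in every hyperedge of the niche hypergraph. -/
theorem swap_niche_eq {α : Type*} [DecidableEq α]
    (D D'' : FinDigraph α) (hD : D.IsLegal) (hac : D.IsAcyclic)
    (u x : α) (hu : u ∈ D.verts) (hx : x ∈ D.verts)
    (hnadj1 : (u, x) ∉ D.arcs) (hnadj2 : (x, u) ∉ D.arcs)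
    (hV : D''.verts = D.verts)
    (hA : ∀ a b : α, (a, b) ∈ D''.arcs ↔ (Equiv.swap u x a, Equiv.swap u x b) ∈ D.arcs) :
    D''.NH = D.NH.image fun e => e.image (Equiv.swap u x) :=
  swap_niche_eq_general D D'' u x hu hx hV hA
end

section
/- Let D1 and D2 be digraphs whose vertex sets intersect in exactly one vertex u, and let D be their union (V(D) = V(D1) ∪ V(D2), A(D) = A(D1) ∪ A(D2)). If N⁻_{D1}(u) = ∅ and N⁺_{D2}(u) = ∅, then the hyperedge set of the niche hypergraph of D is the union of the hyperedge sets of the niche hypergraphs of D1 and D2. -/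
/-! In the union, every in-neighbourhood is the union of the in-neighbourhoods in `D1` and `D2`,
and at each vertex one of these is empty: away from `u` because the vertex lies outside one of
the two digraphs, and at `u` because `u` is a source of `D1`. Dually for out-neighbourhoods,
`u` being a sink of `D2`. So the nonempty neighbourhoods of the union, in particular those of
size at least 2, are exactly the nonempty neighbourhoods of `D1` and of `D2`. -/

namespace Finset

variable {α β : Type*} [DecidableEq α]

theorem eq_empty_or_eq_empty_of_inter_subset_singleton {f g : α → Finset β} {s t : Finset α}
    {u : α} (hf : ∀ v ∉ s, f v = ∅) (hg : ∀ v ∉ t, g v = ∅) (hst : s ∩ t ⊆ {u})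
    (hu : f u = ∅ ∨ g u = ∅) (v : α) : f v = ∅ ∨ g v = ∅ := by
  by_cases hvs : v ∈ s
  · by_cases hvt : v ∈ t
    · obtain rfl : v = u := mem_singleton.1 (hst (mem_inter.2 ⟨hvs, hvt⟩))
      exact hu
    · exact Or.inr (hg v hvt)
  · exact Or.inl (hf v hvs)

theorem filter_image_union_eq_of_exclusive [DecidableEq β] {f g h : α → Finset β} {s t : Finset α}
    {p : Finset β → Prop} [DecidablePred p] (hp : ¬ p ∅) (hf : ∀ v, f v = g v ∪ h v)
    (hgh : ∀ v, g v = ∅ ∨ h v = ∅) (hg : ∀ v ∉ s, g v = ∅) (hh : ∀ v ∉ t, h v = ∅) :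
    ((s ∪ t).image f).filter p = (s.image g).filter p ∪ (t.image h).filter p := by
  ext e
  simp only [mem_union, mem_filter, mem_image]
  constructor
  · rintro ⟨⟨v, -, rfl⟩, hpe⟩
    rcases hgh v with hgv | hhv
    · rw [hf, hgv, empty_union] at hpe ⊢
      have hvt : v ∈ t := by_contra fun hvt => hp (hh v hvt ▸ hpe)
      exact Or.inr ⟨⟨v, hvt, rfl⟩, hpe⟩
    · rw [hf, hhv, union_empty] at hpe ⊢
      have hvs : v ∈ s := by_contra fun hvs => hp (hg v hvs ▸ hpe)
      exact Or.inl ⟨⟨v, hvs, rfl⟩, hpe⟩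
  · rintro (⟨⟨v, hvs, rfl⟩, hpe⟩ | ⟨⟨v, hvt, rfl⟩, hpe⟩)
    · have hhv : h v = ∅ := (hgh v).resolve_left fun hgv => hp (hgv ▸ hpe)
      exact ⟨⟨v, Or.inl hvs, by rw [hf, hhv, union_empty]⟩, hpe⟩
    · have hgv : g v = ∅ := (hgh v).resolve_right fun hhv => hp (hhv ▸ hpe)
      exact ⟨⟨v, Or.inr hvt, by rw [hf, hgv, empty_union]⟩, hpe⟩

end Finset

namespace FinDigraph

open Finset

def ArcsInVerts {α : Type*} (D : FinDigraph α) : Prop :=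
  ∀ a ∈ D.arcs, a.1 ∈ D.verts ∧ a.2 ∈ D.verts

theorem IsLegal.arcsInVerts {α : Type*} [DecidableEq α] {D : FinDigraph α} (hD : D.IsLegal) :
    D.ArcsInVerts :=
  fun a ha => ⟨(hD.1 a ha).1, (hD.1 a ha).2.1⟩

section ArcsInVerts

variable {α : Type*} [DecidableEq α] {D D1 D2 : FinDigraph α}

theorem inN_eq_empty_of_notMem (hD : D.ArcsInVerts) (v : α) (hv : v ∉ D.verts) :
    D.inN v = ∅ :=
  filter_eq_empty_iff.2 fun _ _ harc => hv (hD _ harc).2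

theorem outN_eq_empty_of_notMem (hD : D.ArcsInVerts) (v : α) (hv : v ∉ D.verts) :
    D.outN v = ∅ :=
  filter_eq_empty_iff.2 fun _ _ harc => hv (hD _ harc).1

theorem inN_eq_union (h1 : D1.ArcsInVerts) (h2 : D2.ArcsInVerts)
    (hV : D.verts = D1.verts ∪ D2.verts) (hA : D.arcs = D1.arcs ∪ D2.arcs) (v : α) :
    D.inN v = D1.inN v ∪ D2.inN v := by
  ext w
  simp only [inN, hV, hA, mem_union, mem_filter]
  constructor
  · rintro ⟨-, harc | harc⟩
    exacts [Or.inl ⟨(h1 _ harc).1, harc⟩, Or.inr ⟨(h2 _ harc).1, harc⟩]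
  · rintro (⟨hw, harc⟩ | ⟨hw, harc⟩)
    exacts [⟨Or.inl hw, Or.inl harc⟩, ⟨Or.inr hw, Or.inr harc⟩]

theorem outN_eq_union (h1 : D1.ArcsInVerts) (h2 : D2.ArcsInVerts)
    (hV : D.verts = D1.verts ∪ D2.verts) (hA : D.arcs = D1.arcs ∪ D2.arcs) (v : α) :
    D.outN v = D1.outN v ∪ D2.outN v := by
  ext w
  simp only [outN, hV, hA, mem_union, mem_filter]
  constructor
  · rintro ⟨-, harc | harc⟩
    exacts [Or.inl ⟨(h1 _ harc).2, harc⟩, Or.inr ⟨(h2 _ harc).2, harc⟩]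
  · rintro (⟨hw, harc⟩ | ⟨hw, harc⟩)
    exacts [⟨Or.inl hw, Or.inl harc⟩, ⟨Or.inr hw, Or.inr harc⟩]

end ArcsInVerts

end FinDigraph

/-- For two digraphs sharing exactly one vertex `u`, with `u` a source in the first and
a sink in the second, the niche hypergraph of the union is the union of the niche
hypergraphs. -/
theorem union_niche_eq {α : Type*} [DecidableEq α]
    (D1 D2 D : FinDigraph α) (h1 : D1.IsLegal) (h2 : D2.IsLegal) (u : α)
    (hint : D1.verts ∩ D2.verts = {u})
    (hin : D1.inN u = ∅) (hout : D2.outN u = ∅)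
    (hV : D.verts = D1.verts ∪ D2.verts) (hA : D.arcs = D1.arcs ∪ D2.arcs) :
    D.NH = D1.NH ∪ D2.NH := by
  have h1 := h1.arcsInVerts
  have h2 := h2.arcsInVerts
  have hsmall : ¬ 2 ≤ (∅ : Finset α).card := by simp
  have hin_excl := Finset.eq_empty_or_eq_empty_of_inter_subset_singleton
    (FinDigraph.inN_eq_empty_of_notMem h1) (FinDigraph.inN_eq_empty_of_notMem h2)
    hint.subset (Or.inl hin)
  have hout_excl := Finset.eq_empty_or_eq_empty_of_inter_subset_singleton
    (FinDigraph.outN_eq_empty_of_notMem h1) (FinDigraph.outN_eq_empty_of_notMem h2)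
    hint.subset (Or.inr hout)
  simp only [FinDigraph.NH, hV, Finset.filter_union]
  rw [Finset.filter_image_union_eq_of_exclusive hsmall (FinDigraph.inN_eq_union h1 h2 hV hA)
      hin_excl (FinDigraph.inN_eq_empty_of_notMem h1) (FinDigraph.inN_eq_empty_of_notMem h2),
    Finset.filter_image_union_eq_of_exclusive hsmall (FinDigraph.outN_eq_union h1 h2 hV hA)
      hout_excl (FinDigraph.outN_eq_empty_of_notMem h1) (FinDigraph.outN_eq_empty_of_notMem h2),
    Finset.union_union_union_comm]
end

section
/- Let H be a hypergraph with rank r (every hyperedge has at most r vertices) such that H together with some finite number of isolated vertices is the niche hypergraph of an acyclic digraph. Then the maximum degree of H satisfies Δ(H) ≤ 2r. -/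
open Finset

namespace FinDigraph

variable {α : Type*} [DecidableEq α] (D : FinDigraph α)

lemma subset_verts_of_mem_NH {e : Finset α} (he : e ∈ D.NH) : e ⊆ D.verts := by
  simp only [NH, mem_filter, mem_union, mem_image] at he
  rcases he.1 with ⟨w, -, rfl⟩ | ⟨w, -, rfl⟩ <;> exact filter_subset _ _

lemma two_le_card_of_mem_NH {e : Finset α} (he : e ∈ D.NH) : 2 ≤ #e :=
  (mem_filter.1 he).2

lemma inN_mem_NH {v : α} (hv : v ∈ D.verts) (h : 2 ≤ #(D.inN v)) : D.inN v ∈ D.NH :=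
  mem_filter.2 ⟨mem_union_left _ (mem_image_of_mem _ hv), h⟩

lemma outN_mem_NH {v : α} (hv : v ∈ D.verts) (h : 2 ≤ #(D.outN v)) : D.outN v ∈ D.NH :=
  mem_filter.2 ⟨mem_union_right _ (mem_image_of_mem _ hv), h⟩

lemma card_inN_le {r : ℕ} (hr : ∀ e ∈ D.NH, #e ≤ r) (hr1 : 1 ≤ r) {v : α}
    (hv : v ∈ D.verts) : #(D.inN v) ≤ r := by
  by_cases h : 2 ≤ #(D.inN v)
  · exact hr _ (D.inN_mem_NH hv h)
  · omega

lemma card_outN_le {r : ℕ} (hr : ∀ e ∈ D.NH, #e ≤ r) (hr1 : 1 ≤ r) {v : α}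
    (hv : v ∈ D.verts) : #(D.outN v) ≤ r := by
  by_cases h : 2 ≤ #(D.outN v)
  · exact hr _ (D.outN_mem_NH hv h)
  · omega

lemma filter_mem_NH_subset (v : α) :
    D.NH.filter (v ∈ ·) ⊆ (D.inN v).image D.outN ∪ (D.outN v).image D.inN := by
  intro e he
  obtain ⟨heNH, hve⟩ := mem_filter.1 he
  simp only [NH, mem_filter, mem_union, mem_image] at heNH
  rcases heNH.1 with ⟨w, hw, rfl⟩ | ⟨w, hw, rfl⟩
  · exact mem_union_right _ (mem_image_of_mem _ (mem_filter.2 ⟨hw, (mem_filter.1 hve).2⟩))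
  · exact mem_union_left _ (mem_image_of_mem _ (mem_filter.2 ⟨hw, (mem_filter.1 hve).2⟩))

lemma card_filter_mem_NH_le (v : α) :
    #(D.NH.filter (v ∈ ·)) ≤ #(D.inN v) + #(D.outN v) :=
  (card_le_card (D.filter_mem_NH_subset v)).trans <|
    (card_union_le _ _).trans <| add_le_add card_image_le card_image_le

theorem card_filter_mem_NH_le_two_mul {r : ℕ} (hr : ∀ e ∈ D.NH, #e ≤ r) (v : α) :
    #(D.NH.filter (v ∈ ·)) ≤ 2 * r := by
  obtain h | ⟨e, he⟩ := (D.NH.filter (v ∈ ·)).eq_empty_or_nonempty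
  · simp [h]
  obtain ⟨heNH, hve⟩ := mem_filter.1 he
  have hr1 : 1 ≤ r := by
    have := (D.two_le_card_of_mem_NH heNH).trans (hr e heNH)
    omega
  have hv : v ∈ D.verts := D.subset_verts_of_mem_NH heNH hve
  calc #(D.NH.filter (v ∈ ·)) ≤ #(D.inN v) + #(D.outN v) := D.card_filter_mem_NH_le v
    _ ≤ r + r := add_le_add (D.card_inN_le hr hr1 hv) (D.card_outN_le hr hr1 hv)
    _ = 2 * r := (two_mul r).symm

end FinDigraph

theorem maxDegree_le_two_mul_rank_general {α : Type*} [DecidableEq α]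
    (H : FinHypergraph α) (r : ℕ) (hr : ∀ e ∈ H.edges, e.card ≤ r)
    (D : FinDigraph α) (hNH : D.NH = H.edges) :
    ∀ v : α, H.degree v ≤ 2 * r := by
  intro v
  rw [FinHypergraph.degree, ← hNH]
  exact D.card_filter_mem_NH_le_two_mul (hNH ▸ hr) v

/-- If a hypergraph of rank `r` (plus finitely many isolated vertices) is the niche
hypergraph of an acyclic digraph, then its maximum degree is at most `2r`. -/
theorem maxDegree_le_two_mul_rank {α : Type*} [DecidableEq α]
    (H : FinHypergraph α) (r : ℕ) (hr : ∀ e ∈ H.edges, e.card ≤ r)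
    (D : FinDigraph α) (hleg : D.IsLegal) (hac : D.IsAcyclic)
    (hsub : H.verts ⊆ D.verts) (hNH : D.NH = H.edges) :
    ∀ v : α, H.degree v ≤ 2 * r :=
  maxDegree_le_two_mul_rank_general H r hr D hNH
end

section
/- For every r ≥ 3 and every s with 3 ≤ s ≤ 2r, there exists an r-uniform linear hypertree H with maximum degree Δ(H) = s whose niche number is 0, i.e., H itself (with no added isolated vertices) is the niche hypergraph of some acyclic digraph. -/
/-!
The hub `0` lies on `s` spokes `{0} ∪ Lᵢ` (`1 ≤ i ≤ s`), where the leaf blocks `Lᵢ` of size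
`r - 1` are pairwise disjoint and lie above `2r`; the two further edges `A = {1, …, r}` and
`B = {r + 1, …, 2r}` meet no other edge, so every vertex except the hub has degree at most one.
The digraph has the arcs `0 → A`, `B → 0`, `Lᵢ → i` for `i ≤ r` and `i → Lᵢ` for `r < i ≤ s`
(here `s ≤ 2r` is used). Thus `N⁺(0) = A` and `N⁻(0) = B`, while the arcs `0 → i` and `i → 0`
complete `N⁻(i)`, resp. `N⁺(i)`, to the spoke `{0} ∪ Lᵢ`; every other neighbourhood has at most
one element. All arcs lead from `B` to the hub and the leaves and from there to `A`, so the
digraph is acyclic. Letting each vertex point to its predecessor, except that `r + 1` and the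
leaves point to the hub, gives a tree in which every edge is a subtree.
-/

open Finset

namespace FinDigraph

variable {α : Type*}

theorem isAcyclic_of_rank_lt (D : FinDigraph α) (rank : α → ℕ)
    (h : ∀ a ∈ D.arcs, rank a.1 < rank a.2) : D.IsAcyclic := by
  rintro ⟨n, x, hn, -, hstep, hclose⟩
  have hgrow : ∀ i < n, rank (x 0) + i ≤ rank (x i) := by
    intro i
    induction i with
    | zero => simp
    | succ i ih =>
      intro hi
      have : rank (x i) < rank (x (i + 1)) := h _ (hstep i (by omega))
      have := ih (by omega)
      omega
  have := hgrow (n - 1) (by omega)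
  have : rank (x (n - 1)) < rank (x 0) := h _ hclose
  omega

theorem isLegal_of_rank_lt (D : FinDigraph α) (rank : α → ℕ)
    (hverts : ∀ a ∈ D.arcs, a.1 ∈ D.verts ∧ a.2 ∈ D.verts)
    (h : ∀ a ∈ D.arcs, rank a.1 < rank a.2) : D.IsLegal := by
  refine ⟨fun a ha => ⟨(hverts a ha).1, (hverts a ha).2, fun hne => ?_⟩, fun u v huv hvu => ?_⟩
  · have := h a ha
    rw [hne] at this
    exact lt_irrefl _ this
  · have : rank u < rank v := h _ huv
    have : rank v < rank u := h _ hvu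
    omega

end FinDigraph

namespace FinHypergraph

variable {α : Type*} [DecidableEq α]

theorem isLinear_of_degree_le_one (H : FinHypergraph α) (c : α)
    (h : ∀ v, v ≠ c → H.degree v ≤ 1) : H.IsLinear := by
  intro e he f hf hef
  by_contra! hcard
  obtain ⟨v, hv, hvc⟩ := exists_mem_ne hcard c
  rw [mem_inter] at hv
  have hpair : {e, f} ⊆ H.edges.filter fun g => v ∈ g := by
    simp [insert_subset_iff, he, hf, hv]
  have := card_le_card hpair
  rw [card_pair hef] at this
  exact absurd (h v hvc) (by unfold degree; omega)

end FinHypergraph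

namespace SimpleGraph

variable {V : Type*} (f : V → V) (μ : V → ℕ)

theorem connected_induce_fromRel_parent (A : Set V) {b : V} (hb : b ∈ A)
    (h : ∀ a ∈ A, a ≠ b → f a ∈ A ∧ μ (f a) < μ a) :
    ((fromRel fun x y => f x = y).induce A).Connected := by
  have hreach : ∀ n a (ha : a ∈ A), μ a = n →
      ((fromRel fun x y => f x = y).induce A).Reachable ⟨a, ha⟩ ⟨b, hb⟩ := by
    intro n
    induction n using Nat.strong_induction_on with
    | _ n ih =>
      rintro a ha rfl
      by_cases hab : a = b
      · subst hab
        rfl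
      obtain ⟨hfa, hlt⟩ := h a ha hab
      have hadj : ((fromRel fun x y => f x = y).induce A).Adj ⟨a, ha⟩ ⟨f a, hfa⟩ := by
        refine (fromRel_adj (fun x y => f x = y) a (f a)).2 ⟨fun hfa' => ?_, Or.inl rfl⟩
        rw [← hfa'] at hlt
        exact lt_irrefl _ hlt
      exact hadj.reachable.trans (ih _ hlt _ hfa rfl)
  exact (connected_iff_exists_forall_reachable _).2
    ⟨⟨b, hb⟩, fun a => (hreach _ a.1 a.2 rfl).symm⟩

/-- No edge other than `s(v, f v)` leaves the set of descendants of `v`. -/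
theorem isBridge_fromRel_parent (root : V) (hroot : f root = root)
    (hμ : ∀ v, v ≠ root → μ (f v) < μ v) {v : V} (hv : v ≠ f v) :
    (fromRel fun x y => f x = y).IsBridge s(v, f v) := by
  rw [isBridge_iff_forall_walk_mem_edges]
  intro p
  set S : Set V := {x | ∃ k, f^[k] x = v}
  have hfvS : f v ∉ S := by
    rintro ⟨k, hk⟩
    have hanti : Antitone fun n => μ (f^[n] (f v)) := antitone_nat_of_succ_le fun n => by
      rw [Function.iterate_succ_apply']
      by_cases hn : f^[n] (f v) = root
      · rw [hn, hroot]
      · exact (hμ _ hn).le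
    have hle := hanti (Nat.zero_le k)
    simp only [hk, Function.iterate_zero, id_eq] at hle
    exact absurd (hμ v fun h => hv (h ▸ hroot.symm)) (not_lt.2 hle)
  obtain ⟨d, hd, ⟨k, hk⟩, hdS⟩ := p.exists_boundary_dart S ⟨0, rfl⟩ hfvS
  have hdedge : d.edge = s(v, f v) := by
    rcases d.adj.2 with hfst | hsnd
    · cases k with
      | zero =>
        simp only [Function.iterate_zero, id_eq] at hk
        rw [Dart.edge, ← hfst, hk]
      | succ k =>
        rw [Function.iterate_succ_apply, hfst] at hk
        exact absurd ⟨k, hk⟩ hdS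
    · exact absurd ⟨k + 1, by rw [Function.iterate_succ_apply, hsnd, hk]⟩ hdS
  rw [← hdedge, Walk.edges_eq_map_darts]
  exact List.mem_map_of_mem hd

theorem isTree_fromRel_parent (root : V) (hroot : f root = root)
    (hμ : ∀ v, v ≠ root → μ (f v) < μ v) : (fromRel fun x y => f x = y).IsTree := by
  refine ⟨(induceUnivIso _).connected_iff.1 ?_, isAcyclic_iff_forall_adj_isBridge.2 ?_⟩
  · exact connected_induce_fromRel_parent f μ Set.univ (Set.mem_univ root)
      fun a _ ha => ⟨Set.mem_univ _, hμ a ha⟩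
  · intro a b hab
    rcases hab.2 with rfl | rfl
    · exact isBridge_fromRel_parent f μ root hroot hμ hab.1
    · rw [Sym2.eq_swap]
      exact isBridge_fromRel_parent f μ root hroot hμ hab.1.symm

end SimpleGraph

namespace SpokeHypertree

def leaves (r i : ℕ) : Finset ℕ := Ioc (2 * r + (i - 1) * (r - 1)) (2 * r + i * (r - 1))

def spoke (r i : ℕ) : Finset ℕ := insert 0 (leaves r i)

def verts (r s : ℕ) : Finset ℕ := range (2 * r + s * (r - 1) + 1)

def edges (r s : ℕ) : Finset (Finset ℕ) :=
  insert (Icc 1 r) (insert (Icc (r + 1) (2 * r)) ((Icc 1 s).image (spoke r)))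

def arcs (r s : ℕ) : Finset (ℕ × ℕ) :=
  (verts r s ×ˢ verts r s).filter fun a =>
    (a.1 = 0 ∧ a.2 ∈ Icc 1 r) ∨ (a.1 ∈ Icc (r + 1) (2 * r) ∧ a.2 = 0) ∨
      (a.2 ∈ Icc 1 r ∧ a.1 ∈ leaves r a.2) ∨ (a.1 ∈ Icc (r + 1) (2 * r) ∧ a.2 ∈ leaves r a.1)

def digraph (r s : ℕ) : FinDigraph ℕ := ⟨verts r s, arcs r s⟩

variable {r s : ℕ}

theorem mem_leaves {u i : ℕ} :
    u ∈ leaves r i ↔ 2 * r + (i - 1) * (r - 1) < u ∧ u ≤ 2 * r + i * (r - 1) :=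
  mem_Ioc

theorem two_mul_lt_of_mem_leaves {u i : ℕ} (hu : u ∈ leaves r i) : 2 * r < u := by
  rw [mem_leaves] at hu
  omega

theorem le_of_mem_leaves {u i : ℕ} (hi : i ≤ s) (hu : u ∈ leaves r i) :
    u ≤ 2 * r + s * (r - 1) := by
  rw [mem_leaves] at hu
  have := Nat.mul_le_mul_right (r - 1) hi
  omega

theorem index_le_of_mem_leaves {u i : ℕ} (hu : u ∈ leaves r i) (hus : u ≤ 2 * r + s * (r - 1)) :
    i ≤ s := by
  rw [mem_leaves] at hu
  have : (i - 1) * (r - 1) < s * (r - 1) := by omega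
  have := Nat.lt_of_mul_lt_mul_right this
  omega

theorem eq_of_mem_leaves {u i j : ℕ} (hi : u ∈ leaves r i) (hj : u ∈ leaves r j) : i = j := by
  rw [mem_leaves] at hi hj
  by_contra hij
  rcases Nat.lt_or_gt_of_ne hij with h | h
  · have := Nat.mul_le_mul_right (r - 1) (show i ≤ j - 1 by omega)
    omega
  · have := Nat.mul_le_mul_right (r - 1) (show j ≤ i - 1 by omega)
    omega

theorem card_leaves {i : ℕ} (hi : 1 ≤ i) : #(leaves r i) = r - 1 := by
  obtain ⟨k, rfl⟩ : ∃ k, i = k + 1 := ⟨i - 1, by omega⟩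
  rw [leaves, Nat.card_Ioc, Nat.add_sub_cancel, add_one_mul]
  omega

theorem zero_notMem_leaves {i : ℕ} : 0 ∉ leaves r i :=
  fun h => by have := two_mul_lt_of_mem_leaves h; omega

theorem card_spoke (hr : 1 ≤ r) {i : ℕ} (hi : 1 ≤ i) : #(spoke r i) = r := by
  rw [spoke, card_insert_of_notMem zero_notMem_leaves, card_leaves hi]
  omega

theorem mem_edges {e : Finset ℕ} : e ∈ edges r s ↔
    e = Icc 1 r ∨ e = Icc (r + 1) (2 * r) ∨ ∃ i ∈ Icc 1 s, e = spoke r i := by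
  simp only [edges, mem_insert, mem_image, eq_comm (b := e)]

theorem card_of_mem_edges (hr : 1 ≤ r) {e : Finset ℕ} (he : e ∈ edges r s) : #e = r := by
  rcases mem_edges.1 he with rfl | rfl | ⟨i, hi, rfl⟩
  · simp
  · rw [Nat.card_Icc]
    omega
  · exact card_spoke hr (mem_Icc.1 hi).1

theorem subset_verts_of_mem_edges {e : Finset ℕ} (he : e ∈ edges r s) : e ⊆ verts r s := by
  intro u hu
  rw [verts, mem_range, Nat.lt_succ_iff]
  rcases mem_edges.1 he with rfl | rfl | ⟨i, hi, rfl⟩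
  · rw [mem_Icc] at hu
    omega
  · rw [mem_Icc] at hu
    omega
  · rcases mem_insert.1 hu with rfl | hu
    · omega
    · exact le_of_mem_leaves (mem_Icc.1 hi).2 hu

def hypergraph (r s : ℕ) (hr : 2 ≤ r) : FinHypergraph ℕ where
  verts := verts r s
  edges := edges r s
  edge_sub _ := subset_verts_of_mem_edges
  edge_card _ he := (card_of_mem_edges (by omega) he).symm ▸ hr

theorem filter_zero_mem_edges : (edges r s).filter (0 ∈ ·) = (Icc 1 s).image (spoke r) := by
  ext e
  simp only [mem_filter, mem_image]
  constructor
  · rintro ⟨he, h0⟩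
    rcases mem_edges.1 he with rfl | rfl | ⟨i, hi, rfl⟩
    · simp at h0
    · simp at h0
    · exact ⟨i, hi, rfl⟩
  · rintro ⟨i, hi, rfl⟩
    exact ⟨mem_edges.2 (Or.inr (Or.inr ⟨i, hi, rfl⟩)), mem_insert_self _ _⟩

theorem spoke_injOn (hr : 2 ≤ r) : Set.InjOn (spoke r) {i | 1 ≤ i} := by
  intro i hi j _ hij
  obtain ⟨u, hu⟩ : (leaves r i).Nonempty := by
    rw [← card_pos, card_leaves hi]
    omega
  have hu' : u ∈ spoke r j := hij ▸ mem_insert_of_mem hu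
  rcases mem_insert.1 hu' with rfl | hu'
  · exact absurd hu zero_notMem_leaves
  · exact eq_of_mem_leaves hu hu'

theorem degree_hypergraph_zero (hr : 2 ≤ r) : (hypergraph r s hr).degree 0 = s := by
  rw [FinHypergraph.degree, show (hypergraph r s hr).edges = edges r s from rfl,
    filter_zero_mem_edges, card_image_of_injOn, Nat.card_Icc, Nat.add_sub_cancel]
  exact (spoke_injOn hr).mono fun i hi => (mem_Icc.1 hi).1

theorem eq_or_eq_or_eq_spoke_of_mem {v : ℕ} (hv : v ≠ 0) {e : Finset ℕ} (he : e ∈ edges r s)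
    (hve : v ∈ e) :
    (v ≤ r ∧ e = Icc 1 r) ∨ (r < v ∧ v ≤ 2 * r ∧ e = Icc (r + 1) (2 * r)) ∨
      ∃ i, 2 * r < v ∧ v ∈ leaves r i ∧ e = spoke r i := by
  rcases mem_edges.1 he with rfl | rfl | ⟨i, -, rfl⟩
  · exact Or.inl ⟨(mem_Icc.1 hve).2, rfl⟩
  · have := mem_Icc.1 hve
    exact Or.inr (Or.inl ⟨by omega, this.2, rfl⟩)
  · have hvi := (mem_insert.1 hve).resolve_left hv
    exact Or.inr (Or.inr ⟨i, two_mul_lt_of_mem_leaves hvi, hvi, rfl⟩)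

theorem degree_hypergraph_le_one (hr : 2 ≤ r) {v : ℕ} (hv : v ≠ 0) :
    (hypergraph r s hr).degree v ≤ 1 := by
  refine card_le_one.2 fun e he f hf => ?_
  rw [mem_filter] at he hf
  rcases eq_or_eq_or_eq_spoke_of_mem hv he.1 he.2 with
    ⟨h, rfl⟩ | ⟨h, h', rfl⟩ | ⟨i, h, hi, rfl⟩ <;>
  rcases eq_or_eq_or_eq_spoke_of_mem hv hf.1 hf.2 with
    ⟨k, rfl⟩ | ⟨k, k', rfl⟩ | ⟨j, k, hj, rfl⟩
  all_goals first
    | rfl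
    | omega
    | rw [eq_of_mem_leaves hi hj]

theorem isLinear_hypergraph (hr : 2 ≤ r) : (hypergraph r s hr).IsLinear :=
  FinHypergraph.isLinear_of_degree_le_one _ 0 fun _ hv => degree_hypergraph_le_one hr hv

def parent (r m : ℕ) : ℕ := if m = r + 1 ∨ 2 * r < m then 0 else m - 1

theorem parent_lt {m : ℕ} (hm : m ≠ 0) : parent r m < m := by
  unfold parent
  split_ifs <;> omega

theorem parent_le (m : ℕ) : parent r m ≤ m := by
  unfold parent
  split_ifs <;> omega

def vertsParent (r s : ℕ) (x : {x // x ∈ verts r s}) : {x // x ∈ verts r s} :=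
  ⟨parent r x, mem_range.2 ((parent_le x.1).trans_lt (mem_range.1 x.2))⟩

theorem connected_induce_Icc {a b : ℕ} (ha : a ≤ b) (hb : b ≤ 2 * r)
    (hpar : ∀ m ∈ Ioc a b, parent r m = m - 1) :
    ((SimpleGraph.fromRel fun x y => vertsParent r s x = y).induce
      {x | x.1 ∈ Icc a b}).Connected := by
  have haverts : a ∈ verts r s := by
    rw [verts, mem_range]
    omega
  refine SimpleGraph.connected_induce_fromRel_parent _ Subtype.val _ (b := ⟨a, haverts⟩)
    (show a ∈ Icc a b from mem_Icc.2 ⟨le_rfl, ha⟩) fun x hx hxa => ?_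
  have hx : a ≤ x.1 ∧ x.1 ≤ b := mem_Icc.1 hx
  have hxa : x.1 ≠ a := fun h => hxa (Subtype.ext h)
  have hxpar := hpar x.1 (mem_Ioc.2 ⟨by omega, hx.2⟩)
  refine ⟨show parent r x.1 ∈ Icc a b from ?_, show parent r x.1 < x.1 by omega⟩
  rw [hxpar, mem_Icc]
  omega

theorem connected_induce_spoke (i : ℕ) :
    ((SimpleGraph.fromRel fun x y => vertsParent r s x = y).induce
      {x | x.1 ∈ spoke r i}).Connected := by
  refine SimpleGraph.connected_induce_fromRel_parent _ Subtype.val _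
    (b := ⟨0, by simp [verts]⟩) (show 0 ∈ spoke r i from mem_insert_self 0 _) fun x hx hx0 => ?_
  have hx0 : x.1 ≠ 0 := fun h => hx0 (Subtype.ext h)
  have hleaf := two_mul_lt_of_mem_leaves ((mem_insert.1 hx).resolve_left hx0)
  have hpar : parent r x.1 = 0 := if_pos (Or.inr hleaf)
  exact ⟨show parent r x.1 ∈ spoke r i by rw [hpar]; exact mem_insert_self 0 _, parent_lt hx0⟩

theorem isHypertree_hypergraph (hr : 2 ≤ r) : (hypergraph r s hr).IsHypertree := by
  refine ⟨_, SimpleGraph.isTree_fromRel_parent (vertsParent r s) Subtype.val ⟨0, by simp [verts]⟩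
    (by simp [vertsParent, parent]) fun v hv => parent_lt fun h => hv (Subtype.ext h),
    fun e he => ?_⟩
  rcases mem_edges.1 he with rfl | rfl | ⟨i, -, rfl⟩
  · refine connected_induce_Icc (by omega) (by omega) fun m hm => ?_
    rw [mem_Ioc] at hm
    exact if_neg (by omega)
  · refine connected_induce_Icc (by omega) le_rfl fun m hm => ?_
    rw [mem_Ioc] at hm
    exact if_neg (by omega)
  · exact connected_induce_spoke i

theorem mem_arcs {a b : ℕ} : (a, b) ∈ arcs r s ↔
    a ≤ 2 * r + s * (r - 1) ∧ b ≤ 2 * r + s * (r - 1) ∧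
      ((a = 0 ∧ b ∈ Icc 1 r) ∨ (a ∈ Icc (r + 1) (2 * r) ∧ b = 0) ∨
        (b ∈ Icc 1 r ∧ a ∈ leaves r b) ∨ (a ∈ Icc (r + 1) (2 * r) ∧ b ∈ leaves r a)) := by
  simp only [arcs, verts, mem_filter, mem_product, mem_range, Nat.lt_succ_iff, and_assoc]

theorem mem_inN {u v : ℕ} : u ∈ (digraph r s).inN v ↔ (u, v) ∈ arcs r s := by
  refine mem_filter.trans (and_iff_right_of_imp fun h => ?_)
  simp only [digraph, verts, mem_range]
  have := mem_arcs.1 h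
  omega

theorem mem_outN {u v : ℕ} : u ∈ (digraph r s).outN v ↔ (v, u) ∈ arcs r s := by
  refine mem_filter.trans (and_iff_right_of_imp fun h => ?_)
  simp only [digraph, verts, mem_range]
  have := mem_arcs.1 h
  omega

theorem inN_zero : (digraph r s).inN 0 = Icc (r + 1) (2 * r) := by
  ext u
  rw [mem_inN, mem_arcs]
  constructor
  · rintro ⟨-, -, ⟨-, h⟩ | ⟨h, -⟩ | ⟨h, -⟩ | ⟨-, h⟩⟩
    · simp at h
    · exact h
    · simp at h
    · exact absurd h zero_notMem_leaves
  · intro h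
    have := mem_Icc.1 h
    exact ⟨by omega, by omega, Or.inr (Or.inl ⟨h, rfl⟩)⟩

theorem outN_zero : (digraph r s).outN 0 = Icc 1 r := by
  ext u
  rw [mem_outN, mem_arcs]
  constructor
  · rintro ⟨-, -, ⟨-, h⟩ | ⟨h, -⟩ | ⟨-, h⟩ | ⟨h, -⟩⟩
    · exact h
    · simp at h
    · exact absurd h zero_notMem_leaves
    · simp at h
  · intro h
    have := mem_Icc.1 h
    exact ⟨by omega, by omega, Or.inl ⟨rfl, h⟩⟩

theorem inN_of_mem_Icc {i : ℕ} (hi : i ∈ Icc 1 r) (his : i ≤ s) :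
    (digraph r s).inN i = spoke r i := by
  ext u
  rw [mem_inN, mem_arcs, spoke, mem_insert]
  have hi' := mem_Icc.1 hi
  constructor
  · rintro ⟨-, -, ⟨rfl, -⟩ | ⟨-, rfl⟩ | ⟨-, hu⟩ | ⟨-, hiu⟩⟩
    · exact Or.inl rfl
    · omega
    · exact Or.inr hu
    · have := two_mul_lt_of_mem_leaves hiu
      omega
  · rintro (rfl | hu)
    · exact ⟨by omega, by omega, Or.inl ⟨rfl, hi⟩⟩
    · exact ⟨le_of_mem_leaves his hu, by omega, Or.inr (Or.inr (Or.inl ⟨hi, hu⟩))⟩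

theorem outN_of_mem_Icc {i : ℕ} (hi : i ∈ Icc (r + 1) (2 * r)) (his : i ≤ s) :
    (digraph r s).outN i = spoke r i := by
  ext u
  rw [mem_outN, mem_arcs, spoke, mem_insert]
  have hi' := mem_Icc.1 hi
  constructor
  · rintro ⟨-, -, ⟨rfl, -⟩ | ⟨-, rfl⟩ | ⟨-, hiu⟩ | ⟨-, hu⟩⟩
    · omega
    · exact Or.inl rfl
    · have := two_mul_lt_of_mem_leaves hiu
      omega
    · exact Or.inr hu
  · rintro (rfl | hu)
    · exact ⟨by omega, by omega, Or.inr (Or.inl ⟨hi, rfl⟩)⟩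
    · exact ⟨by omega, le_of_mem_leaves his hu, Or.inr (Or.inr (Or.inr ⟨hi, hu⟩))⟩

theorem card_inN_le_one {v : ℕ} (hv0 : v ≠ 0) (hv : v ∈ Icc 1 r → s < v) :
    #((digraph r s).inN v) ≤ 1 := by
  have key : ∀ u ∈ (digraph r s).inN v, (u = 0 ∧ v ≤ r) ∨ v ∈ leaves r u := by
    intro u hu
    rw [mem_inN, mem_arcs] at hu
    rcases hu with ⟨hu, -, ⟨rfl, hvr⟩ | ⟨-, rfl⟩ | ⟨hvr, hu'⟩ | ⟨-, hvu⟩⟩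
    · exact Or.inl ⟨rfl, (mem_Icc.1 hvr).2⟩
    · exact absurd rfl hv0
    · exact absurd (index_le_of_mem_leaves hu' hu) (not_le.2 (hv hvr))
    · exact Or.inr hvu
  refine card_le_one.2 fun a ha b hb => ?_
  rcases key a ha with ⟨rfl, hvr⟩ | ha' <;> rcases key b hb with ⟨rfl, hvr⟩ | hb'
  · rfl
  · have := two_mul_lt_of_mem_leaves hb'
    omega
  · have := two_mul_lt_of_mem_leaves ha'
    omega
  · exact eq_of_mem_leaves ha' hb'

theorem card_outN_le_one {v : ℕ} (hv0 : v ≠ 0) (hv : v ∈ Icc (r + 1) (2 * r) → s < v) :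
    #((digraph r s).outN v) ≤ 1 := by
  have key : ∀ w ∈ (digraph r s).outN v, (w = 0 ∧ v ≤ 2 * r) ∨ v ∈ leaves r w := by
    intro w hw
    rw [mem_outN, mem_arcs] at hw
    rcases hw with ⟨-, hw, ⟨rfl, -⟩ | ⟨hvr, rfl⟩ | ⟨-, hvw⟩ | ⟨hvr, hw'⟩⟩
    · exact absurd rfl hv0
    · exact Or.inl ⟨rfl, (mem_Icc.1 hvr).2⟩
    · exact Or.inr hvw
    · exact absurd (index_le_of_mem_leaves hw' hw) (not_le.2 (hv hvr))
  refine card_le_one.2 fun a ha b hb => ?_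
  rcases key a ha with ⟨rfl, hvr⟩ | ha' <;> rcases key b hb with ⟨rfl, hvr⟩ | hb'
  · rfl
  · have := two_mul_lt_of_mem_leaves hb'
    omega
  · have := two_mul_lt_of_mem_leaves ha'
    omega
  · exact eq_of_mem_leaves ha' hb'

theorem NH_digraph (hr : 2 ≤ r) (hs : s ≤ 2 * r) : (digraph r s).NH = edges r s := by
  ext e
  simp only [FinDigraph.NH, mem_filter, mem_union, mem_image]
  constructor
  · rintro ⟨⟨v, -, rfl⟩ | ⟨v, -, rfl⟩, hcard⟩
    · rcases eq_or_ne v 0 with rfl | hv0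
      · exact inN_zero ▸ mem_edges.2 (Or.inr (Or.inl rfl))
      by_cases hv : v ∈ Icc 1 r ∧ v ≤ s
      · rw [inN_of_mem_Icc hv.1 hv.2]
        exact mem_edges.2 (Or.inr (Or.inr ⟨v, mem_Icc.2 ⟨(mem_Icc.1 hv.1).1, hv.2⟩, rfl⟩))
      · have := card_inN_le_one (s := s) hv0 fun h => not_le.1 fun h' => hv ⟨h, h'⟩
        omega
    · rcases eq_or_ne v 0 with rfl | hv0
      · exact outN_zero ▸ mem_edges.2 (Or.inl rfl)
      by_cases hv : v ∈ Icc (r + 1) (2 * r) ∧ v ≤ s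
      · rw [outN_of_mem_Icc hv.1 hv.2]
        have := mem_Icc.1 hv.1
        exact mem_edges.2 (Or.inr (Or.inr ⟨v, mem_Icc.2 ⟨by omega, hv.2⟩, rfl⟩))
      · have := card_outN_le_one (s := s) hv0 fun h => not_le.1 fun h' => hv ⟨h, h'⟩
        omega
  · intro he
    refine ⟨?_, (card_of_mem_edges (by omega) he).symm ▸ hr⟩
    have hverts : ∀ {m}, m ≤ 2 * r → m ∈ (digraph r s).verts := fun hm => by
      simp only [digraph, verts, mem_range]
      omega
    rcases mem_edges.1 he with rfl | rfl | ⟨i, hi, rfl⟩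
    · exact Or.inr ⟨0, hverts (by omega), outN_zero⟩
    · exact Or.inl ⟨0, hverts (by omega), inN_zero⟩
    · rw [mem_Icc] at hi
      rcases le_or_gt i r with hir | hir
      · exact Or.inl ⟨i, hverts (by omega), inN_of_mem_Icc (mem_Icc.2 ⟨hi.1, hir⟩) hi.2⟩
      · exact Or.inr ⟨i, hverts (by omega), outN_of_mem_Icc (mem_Icc.2 ⟨hir, by omega⟩) hi.2⟩

def rank (r m : ℕ) : ℕ := if m = 0 then 1 else if m ≤ r then 2 else if m ≤ 2 * r then 0 else 1

theorem rank_lt_of_mem_arcs {a : ℕ × ℕ} (ha : a ∈ arcs r s) : rank r a.1 < rank r a.2 := by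
  obtain ⟨u, v⟩ := a
  simp only [rank]
  rcases (mem_arcs.1 ha).2.2 with ⟨rfl, hv⟩ | ⟨hu, rfl⟩ | ⟨hv, hu⟩ | ⟨hu, hv⟩
  · rw [mem_Icc] at hv
    split_ifs <;> omega
  · rw [mem_Icc] at hu
    split_ifs <;> omega
  · have := two_mul_lt_of_mem_leaves hu
    rw [mem_Icc] at hv
    split_ifs <;> omega
  · have := two_mul_lt_of_mem_leaves hv
    rw [mem_Icc] at hu
    split_ifs <;> omega

theorem isLegal_digraph : (digraph r s).IsLegal :=
  FinDigraph.isLegal_of_rank_lt _ (rank r)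
    (fun _ ha => mem_product.1 (mem_filter.1 ha).1) fun _ => rank_lt_of_mem_arcs

theorem isAcyclic_digraph : (digraph r s).IsAcyclic :=
  FinDigraph.isAcyclic_of_rank_lt _ (rank r) fun _ => rank_lt_of_mem_arcs

end SpokeHypertree

/-- For every `r ≥ 3` and every `3 ≤ s ≤ 2r` there is an `r`-uniform linear hypertree
with maximum degree exactly `s` and niche number zero. -/
theorem exists_uniform_hypertree_niche_zero (r s : ℕ) (hr : 3 ≤ r)
    (hs1 : 3 ≤ s) (hs2 : s ≤ 2 * r) :
    ∃ H : FinHypergraph ℕ, (∀ e ∈ H.edges, e.card = r) ∧ H.IsLinear ∧ H.IsHypertree ∧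
      (∃ v : ℕ, H.degree v = s) ∧ (∀ v : ℕ, H.degree v ≤ s) ∧
      ∃ D : FinDigraph ℕ, D.IsLegal ∧ D.IsAcyclic ∧ D.verts = H.verts ∧
        D.NH = H.edges := by
  open SpokeHypertree in
  have hr2 : 2 ≤ r := by omega
  refine ⟨hypergraph r s hr2, fun e => card_of_mem_edges (by omega), isLinear_hypergraph hr2,
    isHypertree_hypergraph hr2, ⟨0, degree_hypergraph_zero hr2⟩, fun v => ?_, digraph r s,
    isLegal_digraph, isAcyclic_digraph, rfl, NH_digraph hr2 hs2⟩
  rcases eq_or_ne v 0 with rfl | hv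
  · exact (degree_hypergraph_zero hr2).le
  · exact (degree_hypergraph_le_one hr2 hv).trans (by omega)
end
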